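/- Let M be a symmetric positive definite 2n×2n real matrix and Ω_M = {z ∈ ℝ^{2n} : ⟨Mz, z⟩ ≤ ℏ}. Then Ω_M is quantum admissible (i.e. there exists a linear symplectic automorphism S of ℝ^{2n} with S(B^{2n}(√ℏ)) ⊆ Ω_M) if and only if Ω_M^{ℏ,σ} ⊆ Ω_M. -/

import Mathlib

open MeasureTheory Real Metric
open scoped RealInnerProductSpace Pointwise

noncomputable section

/-- `ℝⁿ` with its Euclidean structure. -/
abbrev En (n : ℕ) := EuclideanSpace ℝ (Fin n)

/-- The phase space `ℝ²ⁿ = ℝⁿ × ℝⁿ` with its Euclidean structure, the first block of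
coordinates being the positions `x` and the second block the momenta `p`. -/
abbrev PS (n : ℕ) := EuclideanSpace ℝ (Fin n ⊕ Fin n)

/-- The standard symplectic matrix `J = [[0, I], [-I, 0]]`. -/
def Jmat (n : ℕ) : Matrix (Fin n ⊕ Fin n) (Fin n ⊕ Fin n) ℝ :=
  Matrix.fromBlocks 0 1 (-1) 0

/-- The standard symplectic form `σ(z, z') = ⟨Jz, z'⟩`. -/
def symp (n : ℕ) (z z' : PS n) : ℝ := ⟪(Matrix.toEuclideanLin (Jmat n)) z, z'⟫

/-- The quadratic form `z ↦ ⟨Mz, z⟩`. -/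
def qf {m : Type*} [Fintype m] [DecidableEq m] (M : Matrix m m ℝ)
    (z : EuclideanSpace ℝ m) : ℝ := ⟪(Matrix.toEuclideanLin M) z, z⟫

/-- The symplectic `ℏ`-polar dual `Ω^{ℏ,σ} = {z' : ∀ z ∈ Ω, σ(z, z') ≤ ℏ}`. -/
def sympDual (n : ℕ) (ℏ : ℝ) (Ω : Set (PS n)) : Set (PS n) :=
  {z' | ∀ z ∈ Ω, symp n z z' ≤ ℏ}

/-- A linear automorphism of `ℝ²ⁿ` is symplectic if it preserves the symplectic form. -/
def IsSymplectic {n : ℕ} (S : PS n ≃ₗ[ℝ] PS n) : Prop :=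
  ∀ z z', symp n (S z) (S z') = symp n z z'

/-!
Symplectic polar duality reverses inclusions and commutes with symplectic maps, and the ball
`B = B²ⁿ(√ℏ)` contains its own dual. Hence `S(B) ⊆ Ω` gives
`Ω^{ℏ,σ} ⊆ S(B)^{ℏ,σ} = S(B^{ℏ,σ}) ⊆ S(B) ⊆ Ω`.

Conversely, write `Ω_M = K⁻¹(B)` with `K = √M`. By Cauchy–Schwarz the dual of `Ω_M` contains
the ellipsoid `‖K⁻¹Jᵀz‖ ≤ √ℏ`, so `Ω_M^{ℏ,σ} ⊆ Ω_M` forces `‖Kz‖ ≤ ‖K⁻¹Jᵀz‖`, i.e. `D = KJK`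
is a contraction. The positive matrix `G = K⁻¹ (DDᵀ)^{1/2} K⁻¹` (the geometric mean of `M⁻¹`
and `JMJᵀ`) satisfies `GJG = J` because `(DDᵀ)^{1/2}` commutes with the skew matrix `D`, and then
so does `S = √G`. Finally `‖KS‖² = ‖KGK‖ = ‖(DDᵀ)^{1/2}‖ = ‖D‖ ≤ 1`, that is `S(B) ⊆ Ω_M`.
-/

namespace Matrix

open scoped MatrixOrder Matrix.Norms.L2Operator

variable {m : Type*} [Fintype m] [DecidableEq m]

lemma conjTranspose_eq_neg_of_mul_self_eq_neg_one {J : Matrix m m ℝ} (hJ : Jᴴ * J = 1)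
    (hJJ : J * J = -1) : Jᴴ = -J := by
  calc Jᴴ = -(Jᴴ * J * J) := by rw [mul_assoc, hJJ, mul_neg_one, neg_neg]
    _ = -J := by rw [hJ, one_mul]

lemma sqrt_mul_mul_sqrt_eq_of_mul_mul_eq {G J : Matrix m m ℝ} (hG : 0 ≤ G) (hJ : Jᴴ * J = 1)
    (hGJG : G * J * G = J) : CFC.sqrt G * J * CFC.sqrt G = J := by
  -- `J S Jᴴ` is the square root of `G⁻¹ = J G Jᴴ` and commutes with `S`, so `S J S Jᴴ` is a
  -- nonnegative square root of `1`.
  have hJ' : J * Jᴴ = 1 := mul_eq_one_comm.mp hJ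
  set S := CFC.sqrt G
  set P := J * G * Jᴴ
  have hGP : G * P = 1 := by simp only [P, ← mul_assoc, hGJG, hJ']
  have hGP_comm : Commute G P := hGP.trans (mul_eq_one_comm.mp hGP).symm
  have hQ : CFC.sqrt P = J * S * Jᴴ := by
    refine CFC.sqrt_unique ?_ (star_right_conjugate_nonneg (CFC.sqrt_nonneg G) J)
    calc J * S * Jᴴ * (J * S * Jᴴ) = J * (S * S) * Jᴴ := by
          simp only [mul_assoc, ← mul_assoc Jᴴ, hJ, one_mul]
      _ = P := by rw [CFC.sqrt_mul_sqrt_self G]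
  have hSQ_comm : Commute S (CFC.sqrt P) :=
    ((hGP_comm.cfcₙ_nnreal NNReal.sqrt).symm.cfcₙ_nnreal NNReal.sqrt).symm
  have hSQ : S * CFC.sqrt P = 1 := by
    have hP : 0 ≤ P := star_right_conjugate_nonneg hG J
    rw [← CFC.mul_self_eq_mul_self_iff _ _ (hSQ_comm.mul_nonneg (CFC.sqrt_nonneg G)
      (CFC.sqrt_nonneg P)) zero_le_one, one_mul, mul_assoc, hSQ_comm.symm.left_comm,
      ← mul_assoc, CFC.sqrt_mul_sqrt_self G, CFC.sqrt_mul_sqrt_self P, hGP]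
  calc S * J * S = S * (J * S * Jᴴ) * J := by simp only [mul_assoc, hJ, mul_one]
    _ = J := by rw [← hQ, hSQ, one_mul]

lemma exists_nonneg_mul_mul_eq_and_norm_le_one {K J : Matrix m m ℝ} (hK : IsSelfAdjoint K)
    (hKu : IsUnit K) (hJ : Jᴴ * J = 1) (hJJ : J * J = -1) (hD : ‖K * J * K‖ ≤ 1) :
    ∃ G : Matrix m m ℝ, 0 ≤ G ∧ G * J * G = J ∧ ‖K * G * K‖ ≤ 1 := by
  have hKd := (isUnit_iff_isUnit_det K).mp hKu
  set D := K * J * K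
  set L := CFC.sqrt (D * Dᴴ)
  have hKt : Kᴴ = K := hK
  have hDt : Dᴴ = -D := by
    simp only [D, conjTranspose_mul, hKt, conjTranspose_eq_neg_of_mul_self_eq_neg_one hJ hJJ,
      mul_neg, neg_mul, mul_assoc]
  have hDu : IsUnit D := (hKu.mul ⟨⟨J, Jᴴ, mul_eq_one_comm.mp hJ, hJ⟩, rfl⟩).mul hKu
  have hLL : L * L = D * Dᴴ := CFC.sqrt_mul_sqrt_self _ (mul_star_self_nonneg D)
  have hLD : Commute L D :=
    Commute.cfcₙ_nnreal (by simp only [Commute, SemiconjBy, hDt, mul_neg, neg_mul, mul_assoc]) _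
  have hKinv : IsSelfAdjoint K⁻¹ := by
    show K⁻¹ᴴ = K⁻¹
    rw [conjTranspose_nonsing_inv, hKt]
  refine ⟨K⁻¹ * L * K⁻¹, hKinv.conjugate_nonneg (CFC.sqrt_nonneg _), ?_, ?_⟩
  · set X := K⁻¹ * J * K⁻¹
    have hDX : D * X = -1 := by
      simp only [D, X, mul_assoc, mul_nonsing_inv_cancel_left _ _ hKd]
      rw [← mul_assoc J J, hJJ, neg_one_mul, mul_neg, mul_nonsing_inv _ hKd]
    -- `X = -D⁻¹` and `L` commutes with `D`, so `L X L = -D⁻¹ L² = -Dᴴ = D`.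
    have hLXL : L * X * L = D := by
      refine hDu.mul_left_cancel ?_
      simp only [← mul_assoc, ← hLD.eq]
      rw [mul_assoc L D X, hDX, mul_neg_one, neg_mul, hLL, hDt, mul_neg, neg_neg]
    calc K⁻¹ * L * K⁻¹ * J * (K⁻¹ * L * K⁻¹) = K⁻¹ * (L * X * L) * K⁻¹ := by
          simp only [X, mul_assoc]
      _ = J := by
          rw [hLXL]
          simp only [D, mul_assoc, nonsing_inv_mul_cancel_left _ _ hKd, mul_nonsing_inv _ hKd,
            mul_one]
  · have hKGK : K * (K⁻¹ * L * K⁻¹) * K = L := by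
      simp only [← mul_assoc, mul_nonsing_inv _ hKd, one_mul, nonsing_inv_mul_cancel_right _ _ hKd]
    rw [hKGK]
    have hnorm : ‖L‖ * ‖L‖ = ‖D‖ * ‖D‖ := by
      rw [← CStarRing.norm_star_mul_self, (CFC.sqrt_nonneg _).isSelfAdjoint.star_eq, hLL,
        ← CStarRing.norm_self_mul_star]
      rfl
    rwa [mul_self_inj (norm_nonneg L) (norm_nonneg D) |>.mp hnorm]

lemma exists_conjTranspose_mul_mul_eq_and_norm_mul_le_one {K J : Matrix m m ℝ}
    (hK : IsSelfAdjoint K) (hKu : IsUnit K) (hJ : Jᴴ * J = 1) (hJJ : J * J = -1) (hD : ‖K * J * K‖ ≤ 1) :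
    ∃ S : Matrix m m ℝ, Sᴴ * J * S = J ∧ ‖K * S‖ ≤ 1 := by
  obtain ⟨G, hG, hGJG, hKGK⟩ := exists_nonneg_mul_mul_eq_and_norm_le_one hK hKu hJ hJJ hD
  have hS : IsSelfAdjoint (CFC.sqrt G) := (CFC.sqrt_nonneg G).isSelfAdjoint
  refine ⟨CFC.sqrt G, ?_, ?_⟩
  · rw [show (CFC.sqrt G)ᴴ = CFC.sqrt G from hS]
    exact sqrt_mul_mul_sqrt_eq_of_mul_mul_eq hG hJ hGJG
  · have h : ‖K * CFC.sqrt G‖ * ‖K * CFC.sqrt G‖ ≤ 1 := by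
      rw [← CStarRing.norm_self_mul_star, star_mul, hK.star_eq, hS.star_eq, mul_assoc,
        ← mul_assoc (CFC.sqrt G), CFC.sqrt_mul_sqrt_self G, ← mul_assoc]
      exact hKGK
    nlinarith [norm_nonneg (K * CFC.sqrt G)]

lemma norm_toEuclideanLin_apply_le (A : Matrix m m ℝ) (z : EuclideanSpace ℝ m) :
    ‖toEuclideanLin A z‖ ≤ ‖A‖ * ‖z‖ :=
  (toEuclideanCLM (n := m) (𝕜 := ℝ) A).le_opNorm z

lemma toEuclideanLin_mul_apply (A B : Matrix m m ℝ) (z : EuclideanSpace ℝ m) :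
    toEuclideanLin (A * B) z = toEuclideanLin A (toEuclideanLin B z) := by
  simp

lemma inner_toEuclideanLin_left (A : Matrix m m ℝ) (z z' : EuclideanSpace ℝ m) :
    ⟪toEuclideanLin A z, z'⟫ = ⟪z, toEuclideanLin Aᴴ z'⟫ := by
  rw [toEuclideanLin_conjTranspose_eq_adjoint, LinearMap.adjoint_inner_right]

lemma norm_toEuclideanLin_apply_sq (A : Matrix m m ℝ) (z : EuclideanSpace ℝ m) :
    ‖toEuclideanLin A z‖ ^ 2 = qf (Aᴴ * A) z := by
  rw [qf, toEuclideanLin_mul_apply, real_inner_comm, ← inner_toEuclideanLin_left,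
    real_inner_self_eq_norm_sq]

lemma norm_toEuclideanLin_apply_of_conjTranspose_mul_self {A : Matrix m m ℝ} (hA : Aᴴ * A = 1)
    (z : EuclideanSpace ℝ m) : ‖toEuclideanLin A z‖ = ‖z‖ := by
  have h := norm_toEuclideanLin_apply_sq A z
  rw [hA, qf, toLpLin_one, LinearMap.id_apply, real_inner_self_eq_norm_sq] at h
  exact (pow_left_inj₀ (norm_nonneg _) (norm_nonneg _) two_ne_zero).mp h

end Matrix

open Matrix

lemma norm_le_norm_of_forall_norm_le_imp {E F G : Type*} [AddCommGroup E] [Module ℝ E]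
    [SeminormedAddCommGroup F] [NormedSpace ℝ F] [SeminormedAddCommGroup G] [NormedSpace ℝ G]
    (f : E →ₗ[ℝ] F) (g : E →ₗ[ℝ] G) {r : ℝ} (hr : 0 < r) (h : ∀ z, ‖f z‖ ≤ r → ‖g z‖ ≤ r)
    (z : E) : ‖g z‖ ≤ ‖f z‖ := by
  by_contra! hlt
  have hpos : 0 < ‖f z‖ + ‖g z‖ := by linarith [norm_nonneg (f z)]
  -- the rescaling by `t` puts `r` strictly between `‖f (t • z)‖` and `‖g (t • z)‖`
  set t := 2 * r / (‖f z‖ + ‖g z‖)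
  have ht : 0 < t := by positivity
  have hf : ‖f (t • z)‖ ≤ r := by
    rw [map_smul, norm_smul, Real.norm_of_nonneg ht.le, div_mul_eq_mul_div, div_le_iff₀ hpos]
    nlinarith
  have hg := h _ hf
  rw [map_smul, norm_smul, Real.norm_of_nonneg ht.le, div_mul_eq_mul_div, div_le_iff₀ hpos] at hg
  nlinarith

lemma norm_le_of_forall_mem_closedBall_inner_le {E : Type*} [NormedAddCommGroup E]
    [InnerProductSpace ℝ E] {w : E} {r : ℝ} (hr : 0 < r)
    (h : ∀ z ∈ closedBall (0 : E) r, ⟪z, w⟫ ≤ r * r) : ‖w‖ ≤ r := by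
  rcases eq_or_ne w 0 with rfl | hw
  · simpa using hr.le
  have hw' : 0 < ‖w‖ := norm_pos_iff.mpr hw
  have hz : (r / ‖w‖) • w ∈ closedBall (0 : E) r := by
    rw [mem_closedBall_zero_iff, norm_smul, Real.norm_of_nonneg (by positivity),
      div_mul_cancel₀ _ hw'.ne']
  have := h _ hz
  rw [real_inner_smul_left, real_inner_self_eq_norm_mul_norm, div_mul_eq_mul_div, mul_div_assoc,
    mul_self_div_self] at this
  exact le_of_mul_le_mul_left this hr

lemma Jmat_conjTranspose_mul_self (n : ℕ) : (Jmat n)ᴴ * Jmat n = 1 := by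
  simp [Jmat, fromBlocks_transpose, fromBlocks_multiply, fromBlocks_one]

lemma Jmat_mul_self (n : ℕ) : Jmat n * Jmat n = -1 := by
  simp [Jmat, fromBlocks_multiply, ← fromBlocks_one, fromBlocks_neg]

lemma symp_eq_inner (n : ℕ) (z z' : PS n) : symp n z z' = ⟪z, toEuclideanLin (Jmat n)ᴴ z'⟫ :=
  inner_toEuclideanLin_left _ _ _

lemma sympDual_anti {n : ℕ} {ℏ : ℝ} {Ω Ω' : Set (PS n)} (h : Ω ⊆ Ω') :
    sympDual n ℏ Ω' ⊆ sympDual n ℏ Ω :=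
  fun _ hz' z hz => hz' z (h hz)

lemma IsSymplectic.sympDual_image {n : ℕ} {S : PS n ≃ₗ[ℝ] PS n} (hS : IsSymplectic S) (ℏ : ℝ)
    (Ω : Set (PS n)) : sympDual n ℏ (S '' Ω) = S '' sympDual n ℏ Ω := by
  ext z'
  have key : ∀ z, symp n (S z) z' = symp n z (S.symm z') := fun z => by
    rw [← hS z, S.apply_symm_apply]
  rw [S.image_eq_preimage_symm (sympDual n ℏ Ω)]
  simp only [Set.mem_preimage, sympDual, Set.mem_ofPred_eq, Set.forall_mem_image, key]

lemma sympDual_closedBall_subset {n : ℕ} {ℏ : ℝ} (hℏ : 0 < ℏ) :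
    sympDual n ℏ (closedBall 0 √ℏ) ⊆ closedBall 0 √ℏ := by
  intro z' hz'
  have hJ : (Jmat n)ᴴᴴ * (Jmat n)ᴴ = 1 := by
    rw [conjTranspose_conjTranspose, mul_eq_one_comm, Jmat_conjTranspose_mul_self]
  rw [mem_closedBall_zero_iff, ← norm_toEuclideanLin_apply_of_conjTranspose_mul_self hJ]
  refine norm_le_of_forall_mem_closedBall_inner_le (Real.sqrt_pos.mpr hℏ) fun z hz => ?_
  rw [← symp_eq_inner, Real.mul_self_sqrt hℏ.le]
  exact hz' z hz

lemma IsSymplectic.sympDual_subset_of_image_closedBall_subset {n : ℕ} {ℏ : ℝ} (hℏ : 0 < ℏ)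
    {S : PS n ≃ₗ[ℝ] PS n} (hS : IsSymplectic S) {Ω : Set (PS n)} (h : S '' closedBall 0 √ℏ ⊆ Ω) :
    sympDual n ℏ Ω ⊆ Ω :=
  calc sympDual n ℏ Ω ⊆ sympDual n ℏ (S '' closedBall 0 √ℏ) := sympDual_anti h
    _ = S '' sympDual n ℏ (closedBall 0 √ℏ) := hS.sympDual_image ℏ _
    _ ⊆ S '' closedBall 0 √ℏ := Set.image_mono (sympDual_closedBall_subset hℏ)
    _ ⊆ Ω := h

lemma exists_isSymplectic_coe_eq_toEuclideanLin {n : ℕ}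
    {S : Matrix (Fin n ⊕ Fin n) (Fin n ⊕ Fin n) ℝ} (hS : Sᴴ * Jmat n * S = Jmat n) :
    ∃ T : PS n ≃ₗ[ℝ] PS n, IsSymplectic T ∧ ⇑T = toEuclideanLin S := by
  set S' := -(Jmat n * Sᴴ * Jmat n)
  have hS'S : S' * S = 1 :=
    calc S' * S = -(Jmat n * (Sᴴ * Jmat n * S)) := by simp only [S', neg_mul, mul_assoc]
      _ = 1 := by rw [hS, Jmat_mul_self, neg_neg]
  have hSS' : S * S' = 1 := mul_eq_one_comm.mp hS'S
  refine ⟨LinearEquiv.ofLinearMap (toEuclideanLin S) (toEuclideanLin S') ?_ ?_, ?_, rfl⟩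
  · ext1 z
    simp [← toEuclideanLin_mul_apply, hSS']
  · ext1 z
    simp [← toEuclideanLin_mul_apply, hS'S]
  · intro z z'
    simp only [symp, LinearEquiv.coe_ofLinearMap]
    rw [← toEuclideanLin_mul_apply, real_inner_comm, inner_toEuclideanLin_left, real_inner_comm,
      ← toEuclideanLin_mul_apply, ← mul_assoc, hS]

lemma setOf_qf_le_eq_preimage_closedBall {m : Type*} [Fintype m] [DecidableEq m]
    {M K : Matrix m m ℝ} (hK : Kᴴ * K = M) {ℏ : ℝ} (hℏ : 0 ≤ ℏ) :
    {z | qf M z ≤ ℏ} = toEuclideanLin K ⁻¹' closedBall 0 √ℏ := by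
  ext z
  rw [Set.mem_ofPred_eq, Set.mem_preimage, mem_closedBall_zero_iff, ← hK,
    ← norm_toEuclideanLin_apply_sq, Real.le_sqrt (norm_nonneg _) hℏ]

open scoped Matrix.Norms.L2Operator in
lemma norm_mul_Jmat_mul_le_one_of_sympDual_subset {n : ℕ} {ℏ : ℝ} (hℏ : 0 < ℏ)
    {K : Matrix (Fin n ⊕ Fin n) (Fin n ⊕ Fin n) ℝ} (hK : IsSelfAdjoint K) (hKu : IsUnit K)
    (h : sympDual n ℏ (toEuclideanLin K ⁻¹' closedBall 0 √ℏ) ⊆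
      toEuclideanLin K ⁻¹' closedBall 0 √ℏ) :
    ‖K * Jmat n * K‖ ≤ 1 := by
  have hKd := (isUnit_iff_isUnit_det K).mp hKu
  set B := K⁻¹ * (Jmat n)ᴴ
  have hdual : ∀ z', ‖toEuclideanLin B z'‖ ≤ √ℏ →
      z' ∈ sympDual n ℏ (toEuclideanLin K ⁻¹' closedBall 0 √ℏ) := by
    intro z' hz' z hz
    rw [Set.mem_preimage, mem_closedBall_zero_iff] at hz
    calc symp n z z' = ⟪toEuclideanLin K z, toEuclideanLin B z'⟫ := by
          rw [symp_eq_inner, inner_toEuclideanLin_left, ← toEuclideanLin_mul_apply,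
            show Kᴴ = K from hK, mul_nonsing_inv_cancel_left _ _ hKd]
      _ ≤ ‖toEuclideanLin K z‖ * ‖toEuclideanLin B z'‖ := real_inner_le_norm _ _
      _ ≤ √ℏ * √ℏ := mul_le_mul hz hz' (norm_nonneg _) (Real.sqrt_nonneg _)
      _ = ℏ := Real.mul_self_sqrt hℏ.le
  have hle := norm_le_norm_of_forall_norm_le_imp (toEuclideanLin B) (toEuclideanLin K)
    (Real.sqrt_pos.mpr hℏ) fun z' hz' => by simpa using h (hdual z' hz')
  refine ContinuousLinearMap.opNorm_le_bound _ zero_le_one fun w => ?_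
  change ‖toEuclideanLin (K * Jmat n * K) w‖ ≤ 1 * ‖w‖
  calc ‖toEuclideanLin (K * Jmat n * K) w‖
        = ‖toEuclideanLin K (toEuclideanLin (Jmat n * K) w)‖ := by
        rw [← toEuclideanLin_mul_apply, mul_assoc]
    _ ≤ ‖toEuclideanLin B (toEuclideanLin (Jmat n * K) w)‖ := hle _
    _ = 1 * ‖w‖ := by
        rw [← toEuclideanLin_mul_apply, mul_assoc, ← mul_assoc (Jmat n)ᴴ,
          Jmat_conjTranspose_mul_self, one_mul, nonsing_inv_mul _ hKd, one_mul]
        simp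

open scoped MatrixOrder Matrix.Norms.L2Operator in
theorem exists_isSymplectic_image_closedBall_subset_of_sympDual_subset {n : ℕ} {ℏ : ℝ} (hℏ : 0 < ℏ)
    {M : Matrix (Fin n ⊕ Fin n) (Fin n ⊕ Fin n) ℝ} (hM : M.PosDef)
    (h : sympDual n ℏ {z | qf M z ≤ ℏ} ⊆ {z | qf M z ≤ ℏ}) :
    ∃ S : PS n ≃ₗ[ℝ] PS n, IsSymplectic S ∧ ⇑S '' closedBall 0 √ℏ ⊆ {z | qf M z ≤ ℏ} := by
  set K := CFC.sqrt M
  have hK : IsSelfAdjoint K := (CFC.sqrt_nonneg M).isSelfAdjoint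
  have hKK : Kᴴ * K = M := by
    rw [show Kᴴ = K from hK]
    exact CFC.sqrt_mul_sqrt_self M (nonneg_iff_posSemidef.mpr hM.posSemidef)
  have hKu : IsUnit K := isUnit_of_mul_isUnit_right (hKK ▸ hM.isUnit)
  rw [setOf_qf_le_eq_preimage_closedBall hKK hℏ.le] at h ⊢
  obtain ⟨S, hSJ, hKS⟩ := exists_conjTranspose_mul_mul_eq_and_norm_mul_le_one hK hKu
    (Jmat_conjTranspose_mul_self n) (Jmat_mul_self n)
    (norm_mul_Jmat_mul_le_one_of_sympDual_subset hℏ hK hKu h)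
  obtain ⟨T, hT, hTS⟩ := exists_isSymplectic_coe_eq_toEuclideanLin hSJ
  refine ⟨T, hT, ?_⟩
  rintro _ ⟨w, hw, rfl⟩
  rw [Set.mem_preimage, mem_closedBall_zero_iff, hTS, ← toEuclideanLin_mul_apply]
  calc ‖toEuclideanLin (K * S) w‖ ≤ ‖K * S‖ * ‖w‖ := norm_toEuclideanLin_apply_le _ _
    _ ≤ 1 * √ℏ := mul_le_mul hKS (mem_closedBall_zero_iff.mp hw) (norm_nonneg _) zero_le_one
    _ = √ℏ := one_mul _

/-- the ellipsoid `Ω_M = {⟨Mz,z⟩ ≤ ℏ}` (`M` symmetric positive definite) is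
quantum admissible (contains a quantum blob `S(B²ⁿ(√ℏ))`, `S` symplectic) if and only if
it contains its symplectic polar dual: `Ω_M^{ℏ,σ} ⊆ Ω_M`. -/
theorem stmt6 (n : ℕ) (ℏ : ℝ) (hℏ : 0 < ℏ)
    (M : Matrix (Fin n ⊕ Fin n) (Fin n ⊕ Fin n) ℝ) (hM : M.PosDef) :
    (∃ S : PS n ≃ₗ[ℝ] PS n, IsSymplectic S ∧
        ⇑S '' closedBall (0 : PS n) (Real.sqrt ℏ) ⊆ {z | qf M z ≤ ℏ}) ↔
      sympDual n ℏ {z | qf M z ≤ ℏ} ⊆ {z | qf M z ≤ ℏ} :=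
  ⟨fun ⟨_, hS, h⟩ => hS.sympDual_subset_of_image_closedBall_subset hℏ h,
    exists_isSymplectic_image_closedBall_subset_of_sympDual_subset hℏ hM⟩
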